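/- Let p be a probability distribution on ℤ/dℤ with Fourier transform p̂ satisfying 0 ≤ p̂(s) ≤ 1 for all s, c ≥ 0, and suppose 1 - (c/d)∑_{s=0}^{d-1} p̂(s) > 0. Then for the random walk (Z_j) on ℤ/dℤ with increment distribution p started at 0, and any integer I ≥ 1, E[∏_{k=2}^{I}(1 - c·1_{Z_k = 0})] ≥ (1 - (c/d)∑_{s=0}^{d-1} p̂(s))^I. -/

import Mathlib

/-!
Let `μₙ` be the distribution of the walk after `n` steps, reweighted by `1 - c` at every visit
to `0`; the expectation is the total mass `μ̂_{I-1}(0)`. On the Fourier side one killing step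
reads `μ̂ₙ₊₁(s) = μ̂ₙ(s) p̂(s) - (c/d) ∑ₜ μ̂ₙ(t) p̂(t)`, the subtracted term being `c (μₙ * p)(0)`.
Because `0 ≤ p̂ ≤ 1`, the transforms stay real and maximal at `s = 0`, so the subtracted term is
at most `μ̂ₙ(0) · (c/d) ∑ₜ p̂(t)`, and by induction `μ̂ₙ(0) ≥ (1 - (c/d) ∑ₜ p̂(t))ⁿ`.
-/

open Complex

/-- Discrete Fourier transform of a function on ℤ/dℤ. -/
noncomputable def dftZMod (d : ℕ) [NeZero d] (p : ZMod d → ℝ) (s : ZMod d) : ℂ :=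
  ∑ x : ZMod d, (p x : ℂ) *
    Complex.exp (-2 * Real.pi * Complex.I * (s.val : ℂ) * (x.val : ℂ) / d)

/-- E^{Z₁=0}[∏_{2≤k≤I} (1 - c·1_{Z_k = 0})] for the random walk on ℤ/dℤ with
    Z₁ = 0 and i.i.d. increments distributed according to p. -/
noncomputable def walkExpect (d : ℕ) [NeZero d] (p : ZMod d → ℝ) (c : ℝ) (I : ℕ) : ℝ :=
  ∑ x : Fin (I - 1) → ZMod d, (∏ j, p (x j)) *
    ∏ m : Fin (I - 1),
      (1 - c * if (∑ j ∈ Finset.univ.filter (fun j : Fin (I - 1) => j ≤ m), x j) = 0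
        then 1 else 0)

open Finset ZMod

namespace ZMod

variable {N : ℕ} [NeZero N]

lemma dft_convolution (Φ Ψ : ZMod N → ℂ) (k : ZMod N) :
    𝓕 (fun w => ∑ z, Φ z * Ψ (w - z)) k = 𝓕 Φ k * 𝓕 Ψ k := by
  rw [dft_apply, dft_apply, dft_apply, sum_mul_sum]
  simp only [smul_sum]
  rw [sum_comm]
  refine sum_congr rfl fun z _ => ?_
  rw [← Equiv.sum_comp (Equiv.addLeft z)]
  refine sum_congr rfl fun y _ => ?_
  simp only [Equiv.coe_addLeft, add_sub_cancel_left, add_mul, neg_add, AddChar.map_add_eq_mul,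
    smul_eq_mul]
  ring

lemma sum_dft (Φ : ZMod N → ℂ) : ∑ k, 𝓕 Φ k = N * Φ 0 := by
  simp only [← dft_apply_zero, dft_dft, neg_zero, smul_eq_mul]

lemma dft_ite_zero (a : ℂ) (k : ZMod N) : 𝓕 (fun w => if w = 0 then a else 0) k = a := by
  simp [dft_apply]

lemma dft_convolution_mul_one_sub_ite (Φ Ψ : ZMod N → ℂ) (c : ℂ) (k : ZMod N) :
    𝓕 (fun w => (∑ z, Φ z * Ψ (w - z)) * (1 - c * if w = 0 then 1 else 0)) k =
      𝓕 Φ k * 𝓕 Ψ k - c * ((N : ℂ)⁻¹ * ∑ t, 𝓕 Φ t * 𝓕 Ψ t) := by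
  set conv := fun w => ∑ z, Φ z * Ψ (w - z)
  have hconv0 : conv 0 = (N : ℂ)⁻¹ * ∑ t, 𝓕 Φ t * 𝓕 Ψ t := by
    rw [← sum_congr rfl fun t _ => dft_convolution Φ Ψ t, sum_dft,
      inv_mul_cancel_left₀ (Nat.cast_ne_zero.mpr (NeZero.ne N))]
  have hsplit : (fun w => conv w * (1 - c * if w = 0 then 1 else 0)) =
      conv - fun w => if w = 0 then c * conv 0 else 0 := by
    ext w
    rw [Pi.sub_apply]
    split_ifs with hw
    · subst hw
      ring
    · simp
  rw [hsplit, map_sub, Pi.sub_apply, dft_convolution, dft_ite_zero, hconv0]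

end ZMod

lemma dftZMod_eq_dft (d : ℕ) [NeZero d] (p : ZMod d → ℝ) (s : ZMod d) :
    dftZMod d p s = 𝓕 (fun x => (p x : ℂ)) s := by
  refine sum_congr rfl fun x _ => ?_
  have hcast : -(x * s) = Int.cast (-(x.val * s.val : ℤ)) := by push_cast; simp
  rw [smul_eq_mul, mul_comm, hcast, stdAddChar_coe]
  congr 2
  push_cast
  ring

section KilledWalkHat

variable {ι : Type*} [Fintype ι]

noncomputable def killedWalkHat (q : ι → ℝ) (κ : ℝ) : ℕ → ι → ℝ
  | 0 => fun _ => 1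
  | n + 1 => fun s => killedWalkHat q κ n s * q s - κ * ∑ t, killedWalkHat q κ n t * q t

lemma killedWalkHat_le_apply_and_pow_le {q : ι → ℝ} {κ : ℝ} (hq0 : ∀ s, 0 ≤ q s)
    (hq1 : ∀ s, q s ≤ 1) {i : ι} (hi : q i = 1) (hκ : 0 ≤ κ) (hr : 0 ≤ 1 - κ * ∑ t, q t) (n : ℕ) :
    (∀ s, killedWalkHat q κ n s ≤ killedWalkHat q κ n i) ∧
      (1 - κ * ∑ t, q t) ^ n ≤ killedWalkHat q κ n i := by
  induction n with
  | zero => simp [killedWalkHat]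
  | succ n ih =>
    obtain ⟨hmax, hpow⟩ := ih
    set a := killedWalkHat q κ n
    have ha : 0 ≤ a i := (pow_nonneg hr n).trans hpow
    have hB : ∑ t, a t * q t ≤ a i * ∑ t, q t := by
      rw [mul_sum]
      exact sum_le_sum fun t _ => mul_le_mul_of_nonneg_right (hmax t) (hq0 t)
    simp only [killedWalkHat, hi, mul_one]
    constructor
    · intro s
      have : a s * q s ≤ a i := by
        rcases le_total 0 (a s) with h | h
        · nlinarith [hmax s, hq1 s]
        · nlinarith [hq0 s]
      linarith
    · rw [pow_succ]
      nlinarith [mul_le_mul_of_nonneg_left hB hκ, mul_le_mul_of_nonneg_right hpow hr]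

lemma pow_le_killedWalkHat {q : ι → ℝ} {κ : ℝ} (hq0 : ∀ s, 0 ≤ q s) (hq1 : ∀ s, q s ≤ 1)
    {i : ι} (hi : q i = 1) (hκ : 0 ≤ κ) (hr : 0 ≤ 1 - κ * ∑ t, q t) (n : ℕ) :
    (1 - κ * ∑ t, q t) ^ n ≤ killedWalkHat q κ n i :=
  (killedWalkHat_le_apply_and_pow_le hq0 hq1 hi hκ hr n).2

end KilledWalkHat

section KilledWalk

variable {d : ℕ} [NeZero d]

noncomputable def killedWalk (p : ZMod d → ℝ) (c : ℝ) : ℕ → ZMod d → ℝ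
  | 0 => fun w => if w = 0 then 1 else 0
  | n + 1 => fun w =>
      (∑ z, killedWalk p c n z * p (w - z)) * (1 - c * if w = 0 then 1 else 0)

lemma dft_killedWalk {p : ZMod d → ℝ} {q : ZMod d → ℝ}
    (hq : ∀ s, 𝓕 (fun x => (p x : ℂ)) s = q s) (c : ℝ) (n : ℕ) (s : ZMod d) :
    𝓕 (fun w => (killedWalk p c n w : ℂ)) s = killedWalkHat q (c / d) n s := by
  induction n generalizing s with
  | zero =>
    simp only [killedWalk, apply_ite, ofReal_one, ofReal_zero, dft_ite_zero, killedWalkHat]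
  | succ n ih =>
    have hcast : (fun w => (killedWalk p c (n + 1) w : ℂ)) = fun w =>
        (∑ z, (killedWalk p c n z : ℂ) * (p (w - z) : ℂ)) * (1 - c * if w = 0 then 1 else 0) := by
      ext w
      simp only [killedWalk]
      split_ifs <;> push_cast <;> rfl
    rw [hcast, dft_convolution_mul_one_sub_ite (fun z => (killedWalk p c n z : ℂ))
      (fun x => (p x : ℂ))]
    simp only [ih, hq, killedWalkHat]
    push_cast
    ring

end KilledWalk

section PathWeight

variable {d : ℕ}

noncomputable def pathWeight (p : ZMod d → ℝ) (c : ℝ) {n : ℕ} (x : Fin n → ZMod d) : ℝ :=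
  (∏ j, p (x j)) * ∏ m, (1 - c * if ∑ j ∈ Iic m, x j = 0 then 1 else 0)

lemma walkExpect_eq_sum_pathWeight [NeZero d] (p : ZMod d → ℝ) (c : ℝ) (I : ℕ) :
    walkExpect d p c I = ∑ x : Fin (I - 1) → ZMod d, pathWeight p c x := by
  simp only [walkExpect, pathWeight, filter_ge_eq_Iic]

lemma pathWeight_snoc (p : ZMod d → ℝ) (c : ℝ) {n : ℕ} (x : Fin n → ZMod d) (y : ZMod d) :
    pathWeight p c (Fin.snoc x y : Fin (n + 1) → ZMod d) =
      pathWeight p c x * (p y * (1 - c * if ∑ j, x j + y = 0 then 1 else 0)) := by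
  have hlast : Iic (Fin.last n) = univ := by rw [← Fin.top_eq_last, Iic_top]
  simp only [pathWeight, Fin.prod_univ_castSucc, Fin.snoc_castSucc, Fin.snoc_last,
    Fin.sum_Iic_castSucc, hlast, Fin.sum_univ_castSucc]
  ring

lemma sum_pathWeight_mul [NeZero d] (p : ZMod d → ℝ) (c : ℝ) (n : ℕ) (g : ZMod d → ℝ) :
    ∑ x : Fin n → ZMod d, pathWeight p c x * g (∑ j, x j) = ∑ w, killedWalk p c n w * g w := by
  induction n generalizing g with
  | zero => simp [pathWeight, killedWalk]
  | succ n ih =>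
    set f : ZMod d → ℝ := fun w => 1 - c * if w = 0 then 1 else 0
    calc ∑ x : Fin (n + 1) → ZMod d, pathWeight p c x * g (∑ j, x j)
        = ∑ x : Fin n → ZMod d,
            pathWeight p c x * ∑ y, p y * f (∑ j, x j + y) * g (∑ j, x j + y) := by
          rw [← (Fin.snocEquiv fun _ => ZMod d).sum_comp, Fintype.sum_prod_type, sum_comm]
          refine sum_congr rfl fun x _ => ?_
          rw [mul_sum]
          refine sum_congr rfl fun y _ => ?_
          change pathWeight p c (Fin.snoc x y : Fin (n + 1) → ZMod d) *
            g (∑ j, (Fin.snoc x y : Fin (n + 1) → ZMod d) j) = _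
          simp only [pathWeight_snoc, Fin.sum_univ_castSucc, Fin.snoc_castSucc, Fin.snoc_last, f]
          ring
      _ = ∑ z, killedWalk p c n z * ∑ y, p y * f (z + y) * g (z + y) :=
          ih fun z => ∑ y, p y * f (z + y) * g (z + y)
      _ = ∑ w, killedWalk p c (n + 1) w * g w := by
          simp only [killedWalk, sum_mul, mul_sum]
          conv_rhs => rw [sum_comm]
          refine sum_congr rfl fun z _ =>
            Fintype.sum_bijective (z + ·) (AddGroup.addLeft_bijective z) _ _ fun y => ?_
          simp only [add_sub_cancel_left, f]
          ring

lemma walkExpect_eq_sum_killedWalk [NeZero d] (p : ZMod d → ℝ) (c : ℝ) (I : ℕ) :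
    walkExpect d p c I = ∑ w, killedWalk p c (I - 1) w := by
  simpa [← walkExpect_eq_sum_pathWeight] using sum_pathWeight_mul p c (I - 1) 1

end PathWeight

theorem stmt_17_general (d : ℕ) [NeZero d] (p : ZMod d → ℝ) (c : ℝ)
    (hp1 : ∑ x, p x = 1)
    (hphat : ∀ s, (dftZMod d p s).im = 0 ∧ 0 ≤ (dftZMod d p s).re ∧ (dftZMod d p s).re ≤ 1)
    (hc : 0 ≤ c)
    (hpos : 0 < 1 - (c / d) * ∑ s : ZMod d, (dftZMod d p s).re)
    (I : ℕ) :
    walkExpect d p c I ≥ (1 - (c / d) * ∑ s : ZMod d, (dftZMod d p s).re) ^ I := by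
  set q := fun s => (dftZMod d p s).re
  have hq : ∀ s, 𝓕 (fun x => (p x : ℂ)) s = q s := fun s => by
    rw [← dftZMod_eq_dft]
    exact Complex.ext rfl (hphat s).1
  have hq0 : q 0 = 1 := by simp [q, dftZMod_eq_dft, dft_apply_zero, hp1]
  have hκ : 0 ≤ c / d := by positivity
  have hr1 : 1 - c / d * ∑ s, q s ≤ 1 :=
    sub_le_self _ (mul_nonneg hκ (sum_nonneg fun s _ => (hphat s).2.1))
  have hwalk : walkExpect d p c I = killedWalkHat q (c / d) (I - 1) 0 := by
    have := dft_killedWalk hq c (I - 1) 0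
    rwa [dft_apply_zero, ← ofReal_sum, ofReal_inj, ← walkExpect_eq_sum_killedWalk] at this
  rw [hwalk, ge_iff_le]
  exact (pow_le_pow_of_le_one hpos.le hr1 (Nat.sub_le I 1)).trans
    (pow_le_killedWalkHat (fun s => (hphat s).2.1) (fun s => (hphat s).2.2) hq0 hκ hpos.le _)

theorem stmt_17 (d : ℕ) [NeZero d] (p : ZMod d → ℝ) (c : ℝ)
    (hp0 : ∀ x, 0 ≤ p x) (hp1 : ∑ x, p x = 1)
    (hphat : ∀ s, (dftZMod d p s).im = 0 ∧ 0 ≤ (dftZMod d p s).re ∧ (dftZMod d p s).re ≤ 1)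
    (hc : 0 ≤ c)
    (hpos : 0 < 1 - (c / d) * ∑ s : ZMod d, (dftZMod d p s).re)
    (I : ℕ) (hI : 1 ≤ I) :
    walkExpect d p c I ≥ (1 - (c / d) * ∑ s : ZMod d, (dftZMod d p s).re) ^ I :=
  stmt_17_general d p c hp1 hphat hc hpos I
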